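/- If f is a bounded measurable function and w₁, w₂ are nonnegative integrable weight functions with positive means under P, then |E_P[f w₁]/E_P[w₁] − E_P[f w₂]/E_P[w₂]| ≤ 2 sup|f| · E_P[|w₁−w₂|] / max(E_P[w₁], E_P[w₂]). -/

import Mathlib

open MeasureTheory

lemma aux_snis {Ω : Type*} [MeasurableSpace Ω]
    (P : Measure Ω)
    (f : Ω → ℝ) (hf_meas : Measurable f) (M : ℝ) (hM : 0 ≤ M)
    (hf_bdd : ∀ ω, |f ω| ≤ M)
    (w₁ w₂ : Ω → ℝ)
    (hw₂_nonneg : ∀ ω, 0 ≤ w₂ ω)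
    (hw₁_int : Integrable w₁ P) (hw₂_int : Integrable w₂ P)
    (hw₁_pos : 0 < ∫ ω, w₁ ω ∂P) (hw₂_pos : 0 < ∫ ω, w₂ ω ∂P) :
    |(∫ ω, f ω * w₁ ω ∂P) / (∫ ω, w₁ ω ∂P) -
     (∫ ω, f ω * w₂ ω ∂P) / (∫ ω, w₂ ω ∂P)|
      ≤ 2 * M * (∫ ω, |w₁ ω - w₂ ω| ∂P) / (∫ ω, w₁ ω ∂P) := by
  have habs : ∀ g : Ω → ℝ, |∫ ω, g ω ∂P| ≤ ∫ ω, |g ω| ∂P := fun g => by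
    simpa [Real.norm_eq_abs] using norm_integral_le_integral_norm g
  set B₁ := ∫ ω, w₁ ω ∂P with hB₁
  set B₂ := ∫ ω, w₂ ω ∂P with hB₂
  have hf1 : Integrable (fun ω => f ω * w₁ ω) P :=
    hw₁_int.bdd_mul hf_meas.aestronglyMeasurable (c := M) (Filter.Eventually.of_forall fun ω => by
      simpa [Real.norm_eq_abs] using hf_bdd ω)
  have hf2 : Integrable (fun ω => f ω * w₂ ω) P :=
    hw₂_int.bdd_mul hf_meas.aestronglyMeasurable (c := M) (Filter.Eventually.of_forall fun ω => by
      simpa [Real.norm_eq_abs] using hf_bdd ω)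
  set A₁ := ∫ ω, f ω * w₁ ω ∂P with hA₁
  set A₂ := ∫ ω, f ω * w₂ ω ∂P with hA₂
  set D := ∫ ω, |w₁ ω - w₂ ω| ∂P with hD
  have hDsub : Integrable (fun ω => w₁ ω - w₂ ω) P := hw₁_int.sub hw₂_int
  have hD_nonneg : 0 ≤ D := integral_nonneg fun ω => abs_nonneg _
  have hfd : Integrable (fun ω => f ω * (w₁ ω - w₂ ω)) P :=
    hDsub.bdd_mul hf_meas.aestronglyMeasurable (c := M) (Filter.Eventually.of_forall fun ω => by
      simpa [Real.norm_eq_abs] using hf_bdd ω)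
  -- |A₁ - A₂| ≤ M * D
  have hAdiff : |A₁ - A₂| ≤ M * D := by
    have h1 : A₁ - A₂ = ∫ ω, f ω * (w₁ ω - w₂ ω) ∂P := by
      rw [hA₁, hA₂, ← integral_sub hf1 hf2]
      congr 1; ext ω; ring
    rw [h1]
    calc |∫ ω, f ω * (w₁ ω - w₂ ω) ∂P| ≤ ∫ ω, |f ω * (w₁ ω - w₂ ω)| ∂P :=
          habs _
      _ ≤ ∫ ω, M * |w₁ ω - w₂ ω| ∂P := by
          apply integral_mono hfd.abs (hDsub.abs.const_mul M)
          intro ω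
          dsimp only
          rw [abs_mul]
          exact mul_le_mul_of_nonneg_right (hf_bdd ω) (abs_nonneg _)
      _ = M * D := by rw [hD, integral_const_mul]
  -- |A₂| ≤ M * B₂
  have hA2bd : |A₂| ≤ M * B₂ := by
    calc |A₂| ≤ ∫ ω, |f ω * w₂ ω| ∂P := habs _
      _ ≤ ∫ ω, M * w₂ ω ∂P := by
          apply integral_mono hf2.abs (hw₂_int.const_mul M)
          intro ω
          dsimp only
          rw [abs_mul, abs_of_nonneg (hw₂_nonneg ω)]
          exact mul_le_mul_of_nonneg_right (hf_bdd ω) (hw₂_nonneg ω)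
      _ = M * B₂ := by rw [hB₂, integral_const_mul]
  -- |B₂ - B₁| ≤ D
  have hBdiff : |B₂ - B₁| ≤ D := by
    have h1 : B₁ - B₂ = ∫ ω, (w₁ ω - w₂ ω) ∂P := by
      rw [hB₁, hB₂, ← integral_sub hw₁_int hw₂_int]
    rw [abs_sub_comm, h1]
    calc |∫ ω, (w₁ ω - w₂ ω) ∂P| ≤ ∫ ω, |w₁ ω - w₂ ω| ∂P :=
          habs _
      _ = D := rfl
  have key : A₁ / B₁ - A₂ / B₂ = ((A₁ - A₂) * B₂ + A₂ * (B₂ - B₁)) / (B₁ * B₂) := by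
    field_simp
    ring
  rw [key, abs_div, abs_of_pos (mul_pos hw₁_pos hw₂_pos)]
  rw [div_le_div_iff₀ (mul_pos hw₁_pos hw₂_pos) hw₁_pos]
  calc |(A₁ - A₂) * B₂ + A₂ * (B₂ - B₁)| * B₁
      ≤ (|A₁ - A₂| * B₂ + |A₂| * |B₂ - B₁|) * B₁ := by
        apply mul_le_mul_of_nonneg_right _ hw₁_pos.le
        calc |(A₁ - A₂) * B₂ + A₂ * (B₂ - B₁)|
            ≤ |(A₁ - A₂) * B₂| + |A₂ * (B₂ - B₁)| := abs_add_le _ _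
          _ = |A₁ - A₂| * B₂ + |A₂| * |B₂ - B₁| := by
              rw [abs_mul, abs_mul, abs_of_pos hw₂_pos]
    _ ≤ (M * D * B₂ + M * B₂ * D) * B₁ := by
        apply mul_le_mul_of_nonneg_right _ hw₁_pos.le
        apply add_le_add
        · exact mul_le_mul_of_nonneg_right hAdiff hw₂_pos.le
        · exact mul_le_mul hA2bd hBdiff (abs_nonneg _)
            (mul_nonneg hM hw₂_pos.le)
    _ = 2 * M * D * (B₁ * B₂) := by ring

/-- Perturbation bound for self-normalized importance weighted
expectations: |E_P[f w₁]/E_P[w₁] − E_P[f w₂]/E_P[w₂]|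
  ≤ 2 sup|f| · E_P[|w₁−w₂|] / max(E_P[w₁], E_P[w₂]). -/
theorem stmt_5 {Ω : Type*} [MeasurableSpace Ω]
    (P : Measure Ω) [IsProbabilityMeasure P]
    (f : Ω → ℝ) (hf_meas : Measurable f) (M : ℝ) (hf_bdd : ∀ ω, |f ω| ≤ M)
    (w₁ w₂ : Ω → ℝ)
    (hw₁_nonneg : ∀ ω, 0 ≤ w₁ ω) (hw₂_nonneg : ∀ ω, 0 ≤ w₂ ω)
    (hw₁_int : Integrable w₁ P) (hw₂_int : Integrable w₂ P)
    (hw₁_pos : 0 < ∫ ω, w₁ ω ∂P) (hw₂_pos : 0 < ∫ ω, w₂ ω ∂P) :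
    |(∫ ω, f ω * w₁ ω ∂P) / (∫ ω, w₁ ω ∂P) -
     (∫ ω, f ω * w₂ ω ∂P) / (∫ ω, w₂ ω ∂P)|
      ≤ 2 * M * (∫ ω, |w₁ ω - w₂ ω| ∂P) /
          max (∫ ω, w₁ ω ∂P) (∫ ω, w₂ ω ∂P) := by
  have hne : Nonempty Ω := by
    by_contra h
    rw [not_nonempty_iff] at h
    simp [integral_of_isEmpty] at hw₁_pos
  have hM : 0 ≤ M := le_trans (abs_nonneg _) (hf_bdd (Classical.choice hne))
  rcases max_cases (∫ ω, w₁ ω ∂P) (∫ ω, w₂ ω ∂P) with ⟨hmax, _⟩ | ⟨hmax, _⟩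
  · rw [hmax]
    exact aux_snis P f hf_meas M hM hf_bdd w₁ w₂ hw₂_nonneg hw₁_int hw₂_int
      hw₁_pos hw₂_pos
  · rw [hmax]
    have h := aux_snis P f hf_meas M hM hf_bdd w₂ w₁ hw₁_nonneg hw₂_int hw₁_int
      hw₂_pos hw₁_pos
    rw [abs_sub_comm]
    calc |(∫ ω, f ω * w₂ ω ∂P) / (∫ ω, w₂ ω ∂P) -
          (∫ ω, f ω * w₁ ω ∂P) / (∫ ω, w₁ ω ∂P)|
        ≤ 2 * M * (∫ ω, |w₂ ω - w₁ ω| ∂P) / (∫ ω, w₂ ω ∂P) := h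
      _ = 2 * M * (∫ ω, |w₁ ω - w₂ ω| ∂P) / (∫ ω, w₂ ω ∂P) := by
          simp [abs_sub_comm]
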